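/- arXiv:math/0409407 — 2 statements merged into one kernel-verified Lean document; each statement's English description precedes it below -/
import Mathlib

section
/- For every state σ of the one-dimensional rotor-router model with interval [x, y], there exists N ∈ ℕ such that f_{r,s}^N(σ) has interval [x′, y′] with x′ < x and y′ > y. -/
/-- One step of the one-dimensional rotor walk: a particle at site `t` moves right if the
label there is `R` (`true`) and left if it is `L` (`false`), and the label at `t` is flipped. -/
def walkStep : ℤ × (ℤ → Bool) → ℤ × (ℤ → Bool)
  | (t, ℓ) => ((if ℓ t then t + 1 else t - 1), Function.update ℓ t (!ℓ t))

/-- A state of the one-dimensional rotor-router model: the occupied interval `[x, y]`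
(with `x ≤ 0 ≤ y`) together with a labeling of the sites. -/
structure RState where
  x : ℤ
  y : ℤ
  lab : ℤ → Bool

/-- The equilibration map `f_{r,s}`: run the rotor walk in `[x, y]` from `0` until it stops,
then extend the interval by `r` sites on the left if the walk stopped at `x − 1`, and by `s`
sites on the right if it stopped at `y + 1`, labeling the newly occupied sites `R`. -/
noncomputable def equil (r s : ℤ) (σ : RState) : RState :=
  let N := sInf {n | (walkStep^[n] (0, σ.lab)).1 ∉ Set.Icc σ.x σ.y}
  let c := walkStep^[N] (0, σ.lab)
  if c.1 < σ.x then
    ⟨σ.x - r, σ.y, fun t => if σ.x - r ≤ t ∧ t ≤ σ.x - 1 then true else c.2 t⟩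
  else
    ⟨σ.x, σ.y + s, fun t => if σ.y + 1 ≤ t ∧ t ≤ σ.y + s then true else c.2 t⟩


/-!
Along the rotor walk, the number of sites of `[x, y]` labelled `L` minus the position of the
particle is invariant: a step to the right turns an `R` into an `L`, a step to the left an `L`
into an `R`. Hence the walk started at `0` leaves `[x, y]` at `x - 1` exactly when more than `-x`
sites of `[x, y]` are labelled `L`. An exit at `y + 1` raises that number by `y + 1 ≥ 1` and keeps
`x`, so `x` cannot stay put forever; an exit at `x - 1` lowers its excess over `-x` by at least
`r + 1`, so `y` cannot stay put forever either.

The walk does leave `[x, y]`: from `p` it runs right over `R`s to the first `L`, then left over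
the `L`s it has just written and on to the last `R` left of `p`, so it either exits or starts
afresh strictly to the left of `p`.
-/

open Function
open scoped Finset

lemma iterate_walkStep_of_true (ℓ : ℤ → Bool) (p : ℤ) (k : ℕ) (h : ∀ j < k, ℓ (p + j) = true) :
    walkStep^[k] (p, ℓ) = (p + k, fun t => if p ≤ t ∧ t < p + k then false else ℓ t) := by
  induction k generalizing p ℓ with
  | zero =>
    ext t <;> simp only [iterate_zero, id, Nat.cast_zero, add_zero]
    split_ifs <;> first | rfl | omega
  | succ k ih =>
    have hp : ℓ p = true := by simpa using h 0 k.succ_pos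
    rw [iterate_succ_apply, walkStep]
    simp only [hp, if_true, Bool.not_true]
    rw [ih]
    · ext t
      · push_cast; ring
      · simp only [update_apply]; push_cast; split_ifs <;> first | rfl | omega
    · intro j hj
      rw [update_of_ne (by omega)]
      simpa [add_assoc, add_comm (1 : ℤ)] using h (j + 1) (by omega)

lemma iterate_walkStep_fst_of_false (ℓ : ℤ → Bool) (p : ℤ) (k : ℕ)
    (h : ∀ j < k, ℓ (p - j) = false) : (walkStep^[k] (p, ℓ)).1 = p - k := by
  induction k generalizing p ℓ with
  | zero => simp
  | succ k ih =>
    have hp : ℓ p = false := by simpa using h 0 k.succ_pos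
    rw [iterate_succ_apply, walkStep]
    simp only [hp, Bool.false_eq_true, if_false, Bool.not_false]
    rw [ih]
    · push_cast; ring
    · intro j hj
      rw [update_of_ne (by omega)]
      simpa [sub_sub, add_comm (1 : ℤ)] using h (j + 1) (by omega)

lemma Nat.exists_le_minimal {P : ℕ → Prop} {n : ℕ} (h : P n) :
    ∃ k ≤ n, P k ∧ ∀ j < k, ¬P j := by
  classical
  exact ⟨Nat.find ⟨n, h⟩, Nat.find_min' _ h, Nat.find_spec ⟨n, h⟩, fun _ => Nat.find_min _⟩

lemma exists_iterate_walkStep_notMem_or_mem_Ico {x y p : ℤ} (ℓ : ℤ → Bool)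
    (hp : p ∈ Set.Icc x y) :
    ∃ n, (walkStep^[n] (p, ℓ)).1 ∉ Set.Icc x y ∨ (walkStep^[n] (p, ℓ)).1 ∈ Set.Ico x p := by
  obtain ⟨hxp, hpy⟩ := hp
  obtain ⟨k, hk, hstop, hrun⟩ := Nat.exists_le_minimal
    (P := fun j : ℕ => p + j = y + 1 ∨ ℓ (p + j) = false) (n := (y + 1 - p).toNat)
    (Or.inl (by omega))
  simp only [not_or, Bool.not_eq_false] at hrun
  have hright := iterate_walkStep_of_true ℓ p k fun j hj => (hrun j hj).2
  set ℓ₁ := fun t => if p ≤ t ∧ t < p + k then false else ℓ t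
  rcases hstop with hexit | ha
  · exact ⟨k, Or.inl (by simp [hright, hexit])⟩
  have hℓ₁ : ∀ j : ℕ, j ≤ k → ℓ₁ (p + k - j) = false := by
    intro j hj
    simp only [ℓ₁]
    split_ifs
    · rfl
    · obtain rfl : j = 0 := by omega
      simpa using ha
  obtain ⟨k', hk', hstop', hrun'⟩ := Nat.exists_le_minimal
    (P := fun j : ℕ => p + k - j = x - 1 ∨ ℓ₁ (p + k - j) = true) (n := (p + k - x + 1).toNat)
    (Or.inl (by omega))
  simp only [not_or, Bool.not_eq_true] at hrun'
  have hleft := iterate_walkStep_fst_of_false ℓ₁ (p + k) k' fun j hj => (hrun' j hj).2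
  have hpath : (walkStep^[k' + k] (p, ℓ)).1 = p + k - k' := by
    rw [iterate_add_apply, hright, hleft]
  refine ⟨k' + k, ?_⟩
  by_cases hexit : p + k - k' = x - 1
  · exact Or.inl (by simp [hpath, hexit])
  have hkk' : k < k' := by
    by_contra! h
    simp [hℓ₁ k' h] at hstop'
    omega
  exact Or.inr (by rw [hpath, Set.mem_Ico]; omega)

theorem exists_iterate_walkStep_notMem {x y : ℤ} (c : ℤ × (ℤ → Bool)) (hc : c.1 ∈ Set.Icc x y) :
    ∃ n, (walkStep^[n] c).1 ∉ Set.Icc x y := by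
  induction hm : (c.1 - x).toNat using Nat.strong_induction_on generalizing c with
  | _ m ih =>
    obtain ⟨n, hn | hn⟩ := exists_iterate_walkStep_notMem_or_mem_Ico c.2 hc
    all_goals rw [Prod.mk.eta] at hn
    · exact ⟨n, hn⟩
    · obtain ⟨n', hn'⟩ := ih _ (by rw [Set.mem_Ico] at hn; omega) (walkStep^[n] c)
        ⟨hn.1, by rw [Set.mem_Icc] at hc; exact hn.2.le.trans hc.2⟩ rfl
      exact ⟨n' + n, by rwa [iterate_add_apply]⟩

noncomputable def numL (ℓ : ℤ → Bool) (a b : ℤ) : ℕ := #{t ∈ Finset.Icc a b | ℓ t = false}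

lemma numL_le (ℓ : ℤ → Bool) (a b : ℤ) : numL ℓ a b ≤ (b + 1 - a).toNat :=
  (Finset.card_filter_le _ _).trans_eq (Int.card_Icc a b)

lemma numL_update {ℓ : ℤ → Bool} {a b q : ℤ} (hq : q ∈ Set.Icc a b) (v : Bool) :
    (numL (update ℓ q v) a b : ℤ) + (!ℓ q).toNat = numL ℓ a b + (!v).toNat := by
  have hq' : q ∈ Finset.Icc a b := Finset.mem_Icc.2 hq
  simp only [numL, Finset.card_filter]
  rw [← Finset.add_sum_erase _ _ hq', ← Finset.add_sum_erase _ _ hq',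
    Finset.sum_congr rfl fun t ht => by rw [update_of_ne (Finset.ne_of_mem_erase ht)]]
  cases v <;> cases ℓ q <;> simp <;> ring

lemma numL_walkStep_sub {a b : ℤ} {c : ℤ × (ℤ → Bool)} (hc : c.1 ∈ Set.Icc a b) :
    (numL (walkStep c).2 a b : ℤ) - (walkStep c).1 = numL c.2 a b - c.1 := by
  obtain ⟨q, ℓ⟩ := c
  have := numL_update (ℓ := ℓ) hc (!ℓ q)
  cases h : ℓ q <;> simp [walkStep, h] at this ⊢ <;> omega

lemma numL_iterate_walkStep_sub {a b : ℤ} {c : ℤ × (ℤ → Bool)} {n : ℕ}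
    (hc : ∀ k < n, (walkStep^[k] c).1 ∈ Set.Icc a b) :
    (numL (walkStep^[n] c).2 a b : ℤ) - (walkStep^[n] c).1 = numL c.2 a b - c.1 := by
  induction n with
  | zero => rfl
  | succ n ih =>
    rw [iterate_succ_apply', numL_walkStep_sub (hc n n.lt_succ_self),
      ih fun k hk => hc k (hk.trans n.lt_succ_self)]

lemma walkStep_fst (c : ℤ × (ℤ → Bool)) :
    (walkStep c).1 = c.1 + 1 ∨ (walkStep c).1 = c.1 - 1 := by
  obtain ⟨q, ℓ⟩ := c
  cases h : ℓ q <;> simp [walkStep, h]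

noncomputable def exitConfig (x y : ℤ) (c : ℤ × (ℤ → Bool)) : ℤ × (ℤ → Bool) :=
  walkStep^[sInf {n | (walkStep^[n] c).1 ∉ Set.Icc x y}] c

lemma exitConfig_spec {x y : ℤ} {c : ℤ × (ℤ → Bool)} (hc : c.1 ∈ Set.Icc x y) :
    ((exitConfig x y c).1 = x - 1 ∨ (exitConfig x y c).1 = y + 1) ∧
    (numL (exitConfig x y c).2 x y : ℤ) - (exitConfig x y c).1 = numL c.2 x y - c.1 := by
  set N := sInf {n | (walkStep^[n] c).1 ∉ Set.Icc x y}
  have hout : (walkStep^[N] c).1 ∉ Set.Icc x y :=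
    Nat.sInf_mem (exists_iterate_walkStep_notMem c hc)
  have hin : ∀ k < N, (walkStep^[k] c).1 ∈ Set.Icc x y :=
    fun k hk => not_not.1 (Nat.notMem_of_lt_sInf hk)
  refine ⟨?_, numL_iterate_walkStep_sub hin⟩
  obtain ⟨n, hn⟩ := Nat.exists_eq_succ_of_ne_zero (n := N) fun h0 => hout (by rwa [h0])
  have hlast := hin n (by omega)
  rw [hn, iterate_succ_apply'] at hout
  have hstep := walkStep_fst (walkStep^[n] c)
  change (walkStep^[N] c).1 = x - 1 ∨ (walkStep^[N] c).1 = y + 1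
  rw [hn, iterate_succ_apply']
  simp only [Set.mem_Icc] at hout hlast
  omega

lemma exitConfig_fst_lt_iff {x y : ℤ} {c : ℤ × (ℤ → Bool)} (hc : c.1 ∈ Set.Icc x y) :
    (exitConfig x y c).1 < x ↔ c.1 - x < numL c.2 x y := by
  have := numL_le (exitConfig x y c).2 x y
  have := exitConfig_spec hc
  omega

lemma numL_extend_left (ℓ : ℤ → Bool) (a b : ℤ) {k : ℤ} (hk : 0 ≤ k) :
    numL (fun t => if a - k ≤ t ∧ t ≤ a - 1 then true else ℓ t) (a - k) b = numL ℓ a b := by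
  unfold numL
  congr 1
  ext t
  simp only [Finset.mem_filter, Finset.mem_Icc]
  split_ifs <;> simp <;> omega

lemma numL_extend_right (ℓ : ℤ → Bool) (a b : ℤ) {k : ℤ} (hk : 0 ≤ k) :
    numL (fun t => if b + 1 ≤ t ∧ t ≤ b + k then true else ℓ t) a (b + k) = numL ℓ a b := by
  unfold numL
  congr 1
  ext t
  simp only [Finset.mem_filter, Finset.mem_Icc]
  split_ifs <;> simp <;> omega

lemma equil_eq (r s : ℤ) (σ : RState) : equil r s σ =
    if (exitConfig σ.x σ.y (0, σ.lab)).1 < σ.x then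
      ⟨σ.x - r, σ.y, fun t => if σ.x - r ≤ t ∧ t ≤ σ.x - 1 then true
        else (exitConfig σ.x σ.y (0, σ.lab)).2 t⟩
    else
      ⟨σ.x, σ.y + s, fun t => if σ.y + 1 ≤ t ∧ t ≤ σ.y + s then true
        else (exitConfig σ.x σ.y (0, σ.lab)).2 t⟩ :=
  rfl

lemma equil_of_lt_numL {r : ℤ} (s : ℤ) (hr : 0 ≤ r) {σ : RState} (hx : σ.x ≤ 0) (hy : 0 ≤ σ.y)
    (h : -σ.x < numL σ.lab σ.x σ.y) :
    (equil r s σ).x = σ.x - r ∧ (equil r s σ).y = σ.y ∧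
    (numL (equil r s σ).lab (equil r s σ).x (equil r s σ).y : ℤ) =
      numL σ.lab σ.x σ.y + σ.x - 1 := by
  have hc : ((0 : ℤ), σ.lab).1 ∈ Set.Icc σ.x σ.y := ⟨hx, hy⟩
  have hexit := exitConfig_spec hc
  have hleft := (exitConfig_fst_lt_iff hc).2 (by simpa using h)
  rw [equil_eq, if_pos hleft]
  refine ⟨rfl, rfl, ?_⟩
  dsimp only at hexit ⊢
  rw [numL_extend_left _ _ _ hr]
  omega

lemma equil_of_numL_le (r : ℤ) {s : ℤ} (hs : 0 ≤ s) {σ : RState} (hx : σ.x ≤ 0) (hy : 0 ≤ σ.y)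
    (h : numL σ.lab σ.x σ.y ≤ -σ.x) :
    (equil r s σ).x = σ.x ∧ (equil r s σ).y = σ.y + s ∧
    (numL (equil r s σ).lab (equil r s σ).x (equil r s σ).y : ℤ) =
      numL σ.lab σ.x σ.y + σ.y + 1 := by
  have hc : ((0 : ℤ), σ.lab).1 ∈ Set.Icc σ.x σ.y := ⟨hx, hy⟩
  have hexit := exitConfig_spec hc
  have hright := (exitConfig_fst_lt_iff hc).not.2 (by simpa using h)
  rw [equil_eq, if_neg hright]
  refine ⟨rfl, rfl, ?_⟩
  dsimp only at hexit ⊢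
  rw [numL_extend_right _ _ _ hs]
  omega

lemma antitone_iterate_equil_x {r : ℤ} (s : ℤ) (hr : 0 ≤ r) (σ : RState) :
    Antitone fun n => ((equil r s)^[n] σ).x := by
  refine antitone_nat_of_succ_le fun n => ?_
  rw [iterate_succ_apply', equil_eq]
  split_ifs <;> dsimp only <;> omega

lemma monotone_iterate_equil_y (r : ℤ) {s : ℤ} (hs : 0 ≤ s) (σ : RState) :
    Monotone fun n => ((equil r s)^[n] σ).y := by
  refine monotone_nat_of_le_succ fun n => ?_
  rw [iterate_succ_apply', equil_eq]
  split_ifs <;> dsimp only <;> omega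

lemma exists_iterate_equil_x_lt {r s : ℤ} (hr : 0 < r) (hs : 0 ≤ s) (σ : RState)
    (hx : σ.x ≤ 0) (hy : 0 ≤ σ.y) : ∃ n, ((equil r s)^[n] σ).x < σ.x := by
  suffices ∀ k : ℕ, ∀ τ : RState, τ.x ≤ 0 → 0 ≤ τ.y → -τ.x < numL τ.lab τ.x τ.y + k →
      ∃ n, ((equil r s)^[n] τ).x < τ.x from
    this (1 - σ.x).toNat σ hx hy (by omega)
  intro k τ hx hy h
  induction k generalizing τ with
  | zero => exact ⟨1, by simp [(equil_of_lt_numL s hr.le hx hy (by simpa using h)).1, hr]⟩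
  | succ k ih =>
    by_cases hτ : -τ.x < numL τ.lab τ.x τ.y
    · exact ⟨1, by simp [(equil_of_lt_numL s hr.le hx hy hτ).1, hr]⟩
    obtain ⟨hx', hy', hnum⟩ := equil_of_numL_le r hs hx hy (not_lt.1 hτ)
    obtain ⟨n, hn⟩ := ih (equil r s τ) (by omega) (by omega) (by push_cast at h; omega)
    exact ⟨n + 1, by rwa [iterate_succ_apply, ← hx']⟩

lemma exists_iterate_equil_lt_y {r s : ℤ} (hr : 0 ≤ r) (hs : 0 < s) (σ : RState)
    (hx : σ.x ≤ 0) (hy : 0 ≤ σ.y) : ∃ n, σ.y < ((equil r s)^[n] σ).y := by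
  suffices ∀ k : ℕ, ∀ τ : RState, τ.x ≤ 0 → 0 ≤ τ.y → numL τ.lab τ.x τ.y ≤ -τ.x + k →
      ∃ n, τ.y < ((equil r s)^[n] τ).y from
    this (σ.y + 1).toNat σ hx hy (by have := numL_le σ.lab σ.x σ.y; omega)
  intro k τ hx hy h
  induction k generalizing τ with
  | zero => exact ⟨1, by simp [(equil_of_numL_le r hs.le hx hy (by simpa using h)).2.1, hs]⟩
  | succ k ih =>
    by_cases hτ : numL τ.lab τ.x τ.y ≤ -τ.x
    · exact ⟨1, by simp [(equil_of_numL_le r hs.le hx hy hτ).2.1, hs]⟩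
    obtain ⟨hx', hy', hnum⟩ := equil_of_lt_numL s hr hx hy (not_le.1 hτ)
    obtain ⟨n, hn⟩ := ih (equil r s τ) (by omega) (by omega) (by push_cast at h; omega)
    exact ⟨n + 1, by rwa [iterate_succ_apply, ← hy']⟩

/-- For every state with interval `[x, y]` there is an `N` such that after `N` applications
of `f_{r,s}` the interval `[x′, y′]` satisfies `x′ < x` and `y′ > y`. -/
theorem interval_grows_both_ways (r s : ℤ) (hr : 0 < r) (hs : 0 < s)
    (σ : RState) (hx : σ.x ≤ 0) (hy : 0 ≤ σ.y) :
    ∃ N : ℕ, ((equil r s)^[N] σ).x < σ.x ∧ σ.y < ((equil r s)^[N] σ).y := by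
  obtain ⟨N₁, h₁⟩ := exists_iterate_equil_x_lt hr hs.le σ hx hy
  obtain ⟨N₂, h₂⟩ := exists_iterate_equil_lt_y hr.le hs σ hx hy
  exact ⟨max N₁ N₂, (antitone_iterate_equil_x s hr.le σ (le_max_left _ _)).trans_lt h₁,
    h₂.trans_le (monotone_iterate_equil_y r hs.le σ (le_max_right _ _))⟩
end

section
/- Let σ = (x, y, z) and σ′ = (x′, y′, z′) be states in Rec with x ≡ x′ (mod r) and y ≡ y′ (mod s). Then σ and σ′ lie in the same orbit of f_{r,s} — i.e., there exists k ∈ ℕ with f_{r,s}^k(σ) = σ′ or f_{r,s}^k(σ′) = σ — if and only if g_{r,s}(σ) = g_{r,s}(σ′). -/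
/-- The one-dimensional rotor-router equilibration map on recurrent-state triples,
`f_{r,s}(x,y,z) = (x, y+s, z-y)` if `x+y ≤ z`, and `(x-r, y, z-x+1)` otherwise. -/
def rotorF (r s : ℤ) : ℤ × ℤ × ℤ → ℤ × ℤ × ℤ
  | (x, y, z) => if x + y ≤ z then (x, y + s, z - y) else (x - r, y, z - x + 1)

/-- The invariant `g_{r,s}(x,y,z) = s x² − r y² + (r−2) s x + r s y − 2 r s z`. -/
def rotorG (r s : ℤ) : ℤ × ℤ × ℤ → ℤ
  | (x, y, z) => s * x ^ 2 - r * y ^ 2 + (r - 2) * s * x + r * s * y - 2 * r * s * z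

/-- The set of recurrent states `{(x,y,z) : x ≤ 0 ≤ y, x ≤ z ≤ y}`. -/
def RecSet : Set (ℤ × ℤ × ℤ) :=
  {p | p.1 ≤ 0 ∧ 0 ≤ p.2.1 ∧ p.1 ≤ p.2.2 ∧ p.2.2 ≤ p.2.1}

lemma rec_step {r s : ℤ} (hr : 0 < r) (hs : 0 < s) {σ : ℤ × ℤ × ℤ}
    (h : σ ∈ RecSet) : rotorF r s σ ∈ RecSet := by
  obtain ⟨x, y, z⟩ := σ
  simp only [RecSet, Set.mem_setOf_eq] at h ⊢
  simp only [rotorF]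
  split <;> simp only <;> omega

lemma g_step (r s : ℤ) (σ : ℤ × ℤ × ℤ) :
    rotorG r s (rotorF r s σ) = rotorG r s σ := by
  obtain ⟨x, y, z⟩ := σ
  simp only [rotorF]
  split <;> simp only [rotorG] <;> ring

lemma x_step (r s : ℤ) (σ : ℤ × ℤ × ℤ) :
    (rotorF r s σ).1 ≡ σ.1 [ZMOD r] := by
  obtain ⟨x, y, z⟩ := σ
  simp only [rotorF]
  split
  · rfl
  · exact Int.modEq_iff_dvd.mpr ⟨1, by ring⟩

lemma y_step (r s : ℤ) (σ : ℤ × ℤ × ℤ) :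
    (rotorF r s σ).2.1 ≡ σ.2.1 [ZMOD s] := by
  obtain ⟨x, y, z⟩ := σ
  simp only [rotorF]
  split
  · exact Int.modEq_iff_dvd.mpr ⟨-1, by ring⟩
  · rfl

lemma t_step (r s : ℤ) (σ : ℤ × ℤ × ℤ) :
    r * (rotorF r s σ).2.1 - s * (rotorF r s σ).1
      = r * σ.2.1 - s * σ.1 + r * s := by
  obtain ⟨x, y, z⟩ := σ
  simp only [rotorF]
  split <;> simp only <;> ring

lemma iter_props (r s : ℤ) (hr : 0 < r) (hs : 0 < s) (k : ℕ) (σ : ℤ × ℤ × ℤ)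
    (h : σ ∈ RecSet) :
    (rotorF r s)^[k] σ ∈ RecSet ∧
    rotorG r s ((rotorF r s)^[k] σ) = rotorG r s σ ∧
    ((rotorF r s)^[k] σ).1 ≡ σ.1 [ZMOD r] ∧
    ((rotorF r s)^[k] σ).2.1 ≡ σ.2.1 [ZMOD s] ∧
    r * ((rotorF r s)^[k] σ).2.1 - s * ((rotorF r s)^[k] σ).1
      = r * σ.2.1 - s * σ.1 + (k : ℤ) * (r * s) := by
  induction k with
  | zero => exact ⟨h, rfl, Int.ModEq.refl _, Int.ModEq.refl _, by norm_num⟩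
  | succ n ih =>
    obtain ⟨h1, h2, h3, h4, h5⟩ := ih
    rw [Function.iterate_succ_apply']
    refine ⟨rec_step hr hs h1, (g_step _ _ _).trans h2, (x_step _ _ _).trans h3,
      (y_step _ _ _).trans h4, ?_⟩
    rw [t_step]
    push_cast
    linarith

lemma key_contra (r s x y z x' y' z' a : ℤ) (hr : 0 < r) (hs : 0 < s)
    (ha : 1 ≤ a) (hx0 : x ≤ 0) (hy0 : 0 ≤ y') (hz1 : z' ≤ y') (hz2 : x ≤ z)
    (hx' : x' = x - r * a) (hy' : y' = y - s * a)
    (hz : 2 * (z' - z) = 2 * a * (y - x) + (r - s) * a * (a - 1) - 2 * a * (s - 1)) :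
    False := by
  subst hx' hy'
  nlinarith [mul_nonneg (by omega : (0:ℤ) ≤ a - 1)
               (by linarith : (0:ℤ) ≤ y - x - s * a),
             mul_nonneg (mul_nonneg (by omega : (0:ℤ) ≤ a) (by omega : (0:ℤ) ≤ a - 1))
               (by omega : (0:ℤ) ≤ r + s)]

lemma same_of_eq (r s : ℤ) (hr : 0 < r) (hs : 0 < s)
    (σ σ' : ℤ × ℤ × ℤ) (h : σ ∈ RecSet) (h' : σ' ∈ RecSet) (a : ℤ)
    (hxa : σ'.1 = σ.1 - r * a) (hya : σ'.2.1 = σ.2.1 - s * a)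
    (hg : rotorG r s σ = rotorG r s σ') : σ = σ' := by
  obtain ⟨x, y, z⟩ := σ; obtain ⟨x', y', z'⟩ := σ'
  simp only [RecSet, Set.mem_setOf_eq] at h h'
  simp only at hxa hya
  simp only [rotorG] at hg
  subst hxa hya
  have hrs : (r * s : ℤ) ≠ 0 := by positivity
  have hz : r * s * (2 * (z' - z)) =
      r * s * (2 * a * (y - x) + (r - s) * a * (a - 1) - 2 * a * (s - 1)) := by
    linear_combination hg
  have hz2 := mul_left_cancel₀ hrs hz
  rcases lt_trichotomy a 0 with hlt | heq | hgt
  · exfalso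
    have hswap : 2 * (z - z') = 2 * (-a) * (y - s * a - (x - r * a))
        + (r - s) * (-a) * (-a - 1) - 2 * (-a) * (s - 1) := by linear_combination -hz2
    have hna : 1 ≤ -a := by omega
    exact key_contra r s (x - r * a) (y - s * a) z' x y z (-a) hr hs hna
      h'.1 h.2.1 h.2.2.2 h'.2.2.1 (by ring) (by ring) hswap
  · subst heq
    have hz3 : z = z' := by nlinarith [hz2]
    simp [hz3]
  · exfalso
    exact key_contra r s x y z (x - r * a) (y - s * a) z' a hr hs hgt h.1 h'.2.1
      h'.2.2.2 h.2.2.1 rfl rfl hz2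

lemma reach (r s : ℤ) (hr : 0 < r) (hs : 0 < s)
    (σ σ' : ℤ × ℤ × ℤ) (hσ : σ ∈ RecSet) (hσ' : σ' ∈ RecSet)
    (b c : ℤ) (hb : σ'.2.1 - σ.2.1 = s * b) (hc : σ'.1 - σ.1 = r * c)
    (hg : rotorG r s σ = rotorG r s σ') (hbc : c ≤ b) :
    (rotorF r s)^[(b - c).toNat] σ = σ' := by
  obtain ⟨h1, h2, h3, h4, h5⟩ := iter_props r s hr hs (b - c).toNat σ hσ
  set τ := (rotorF r s)^[(b - c).toNat] σ with hτ
  obtain ⟨a', ha'⟩ := h3.dvd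
  have hk : ((b - c).toNat : ℤ) = b - c := Int.toNat_of_nonneg (by omega)
  rw [hk] at h5
  have hxa : σ'.1 = τ.1 - r * (-(a' + c)) := by linear_combination ha' + hc
  have ht' : r * σ'.2.1 - s * σ'.1 = r * σ.2.1 - s * σ.1 + (b - c) * (r * s) := by
    linear_combination r * hb - s * hc
  have h0 : r * (τ.2.1 - σ'.2.1 - s * (-(a' + c))) = 0 := by
    linear_combination h5 - ht' - s * hxa
  have hya : σ'.2.1 = τ.2.1 - s * (-(a' + c)) := by
    rcases mul_eq_zero.mp h0 with h | h
    · exact absurd h hr.ne'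
    · linarith
  exact same_of_eq r s hr hs τ σ' h1 hσ' (-(a' + c)) hxa hya (h2.trans hg)

/-- Completeness of the invariants: two congruent recurrent states (`x ≡ x′ (mod r)` and
`y ≡ y′ (mod s)`) lie in the same orbit of `f_{r,s}` if and only if they have the same value
of `g_{r,s}`. -/
theorem rotor_orbit_classification (r s : ℤ) (hr : 0 < r) (hs : 0 < s)
    (σ σ' : ℤ × ℤ × ℤ) (hσ : σ ∈ RecSet) (hσ' : σ' ∈ RecSet)
    (hx : σ.1 ≡ σ'.1 [ZMOD r]) (hy : σ.2.1 ≡ σ'.2.1 [ZMOD s]) :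
    (∃ k : ℕ, (rotorF r s)^[k] σ = σ' ∨ (rotorF r s)^[k] σ' = σ) ↔
      rotorG r s σ = rotorG r s σ' := by
  constructor
  · rintro ⟨k, hk | hk⟩
    · rw [← hk]
      exact ((iter_props r s hr hs k σ hσ).2.1).symm
    · rw [← hk]
      exact (iter_props r s hr hs k σ' hσ').2.1
  · intro hg
    obtain ⟨c, hc⟩ := hx.dvd
    obtain ⟨b, hb⟩ := hy.dvd
    rcases le_or_gt c b with h | h
    · exact ⟨(b - c).toNat, Or.inl (reach r s hr hs σ σ' hσ hσ' b c hb hc hg h)⟩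
    · refine ⟨(-b - -c).toNat, Or.inr (reach r s hr hs σ' σ hσ' hσ (-b) (-c)
        (by linear_combination -hb) (by linear_combination -hc) hg.symm (by omega))⟩
end
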